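/- arXiv:0906.2854 — 8 statements merged into one kernel-verified Lean document; each statement's English description precedes it below -/
import Mathlib

section
/- Let X be a Banach space and A a subalgebra of B(X). Suppose every T of the form S + λI with S ∈ A, λ ∈ ℂ, which is injective with closed range, is surjective. If 𝔄 is the norm-closure of A in B(X), then every T of the form S + λI with S ∈ 𝔄, λ ∈ ℂ, which is injective with closed range, is surjective. -/
/-- Surjunctivity passes to the norm closure: if every `S + μ•I`, for `S` in a subalgebra
`A` of `B(X)`, which is injective with closed range is surjective, then the same holds for
`S` in the norm closure of `A`. -/
theorem surjunctive_of_closure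
    (X : Type*) [NormedAddCommGroup X] [NormedSpace ℂ X] [CompleteSpace X]
    (A : NonUnitalSubalgebra ℂ (X →L[ℂ] X))
    (h : ∀ S ∈ A, ∀ μ : ℂ,
      Function.Injective ⇑(S + μ • (1 : X →L[ℂ] X)) →
      IsClosed (Set.range ⇑(S + μ • (1 : X →L[ℂ] X))) →
      Function.Surjective ⇑(S + μ • (1 : X →L[ℂ] X)))
    (S : X →L[ℂ] X) (hS : S ∈ closure (A : Set (X →L[ℂ] X))) (μ : ℂ)
    (hinj : Function.Injective ⇑(S + μ • (1 : X →L[ℂ] X)))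
    (hcl : IsClosed (Set.range ⇑(S + μ • (1 : X →L[ℂ] X)))) :
    Function.Surjective ⇑(S + μ • (1 : X →L[ℂ] X)) := by
  set T : X →L[ℂ] X := S + μ • (1 : X →L[ℂ] X) with hTdef
  -- T is bounded below
  obtain ⟨K, hK⟩ : ∃ K : NNReal, AntilipschitzWith K ⇑T := by
    set e := T.equivRange hinj hcl with he
    refine ⟨‖(e.symm : LinearMap.range (T : X →ₗ[ℂ] X) →L[ℂ] X)‖₊, fun x y => ?_⟩
    have h1 := e.antilipschitz x y
    rw [Subtype.edist_eq] at h1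
    exact h1
  set c : ℝ := ((K : ℝ) + 1)⁻¹ with hcdef
  have hc : 0 < c := by positivity
  have hbound : ∀ x : X, c * ‖x‖ ≤ ‖T x‖ := by
    intro x
    have h1 : dist x 0 ≤ K * dist (T x) (T 0) := hK.le_mul_dist x 0
    simp only [dist_zero_right, map_zero] at h1
    have hK1 : (0:ℝ) ≤ (K:ℝ) := K.coe_nonneg
    have h2 : ‖x‖ ≤ ((K:ℝ) + 1) * ‖T x‖ := by nlinarith [norm_nonneg (T x)]
    rw [hcdef]
    rw [inv_mul_le_iff₀ (by positivity)]
    linarith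
  -- choose an approximant S' ∈ A
  obtain ⟨S', hS'A, hdist⟩ := Metric.mem_closure_iff.mp hS (c / 3) (by positivity)
  have hnorm : ‖S - S'‖ < c / 3 := by rwa [← dist_eq_norm]
  set T' : X →L[ℂ] X := S' + μ • (1 : X →L[ℂ] X) with hT'def
  have hTT' : T - T' = S - S' := by rw [hTdef, hT'def]; abel
  -- T' is bounded below
  have hlow : ∀ x : X, 2 * c / 3 * ‖x‖ ≤ ‖T' x‖ := by
    intro x
    have h1 : ‖T x‖ ≤ ‖T' x‖ + ‖(S - S') x‖ := by
      calc ‖T x‖ = ‖T' x + (S - S') x‖ := by rw [← hTT']; simp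
        _ ≤ ‖T' x‖ + ‖(S - S') x‖ := norm_add_le _ _
    have h2 : ‖(S - S') x‖ ≤ ‖S - S'‖ * ‖x‖ := (S - S').le_opNorm x
    have h3 := hbound x
    nlinarith [norm_nonneg x]
  have hinj' : Function.Injective ⇑T' := by
    intro x y hxy
    have h1 := hlow (x - y)
    have h2 : T' (x - y) = 0 := by rw [map_sub, hxy, sub_self]
    rw [h2, norm_zero] at h1
    have h3 : ‖x - y‖ ≤ 0 := by nlinarith
    have h4 : x - y = 0 := by rwa [← norm_le_zero_iff]
    exact sub_eq_zero.mp h4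
  -- T' has closed range
  have hcl' : IsClosed (Set.range ⇑T') := by
    have hpos : (0:ℝ) < 2 * c / 3 := by positivity
    have hanti : AntilipschitzWith (Real.toNNReal (2 * c / 3))⁻¹ ⇑T' := by
      apply T'.antilipschitz_of_bound
      intro x
      have h1 := hlow x
      rw [NNReal.coe_inv, Real.coe_toNNReal _ hpos.le]
      calc ‖x‖ = (2 * c / 3)⁻¹ * (2 * c / 3 * ‖x‖) := by field_simp
        _ ≤ (2 * c / 3)⁻¹ * ‖T' x‖ :=
            mul_le_mul_of_nonneg_left h1 (inv_pos.mpr hpos).le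
    exact hanti.isClosed_range T'.uniformContinuous
  -- so T' is surjective, hence a unit
  have hsurj' : Function.Surjective ⇑T' := h S' hS'A μ hinj' hcl'
  have hunit' : IsUnit T' := ContinuousLinearMap.isUnit_iff_bijective.mpr ⟨hinj', hsurj'⟩
  obtain ⟨u, hu⟩ := hunit'
  set V : X →L[ℂ] X := ↑u⁻¹ with hVdef
  have hTV : ∀ y : X, T' (V y) = y := by
    intro y
    have huu : (↑u * ↑u⁻¹ : X →L[ℂ] X) = 1 := by
      rw [← Units.val_mul, mul_inv_cancel, Units.val_one]
    calc T' (V y) = (↑u * ↑u⁻¹ : X →L[ℂ] X) y := by rw [hu]; rfl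
      _ = y := by rw [huu]; rfl
  have hVnorm : ‖V‖ ≤ 3 / (2 * c) := by
    apply ContinuousLinearMap.opNorm_le_bound _ (by positivity)
    intro y
    have h1 := hlow (V y)
    rw [hTV y] at h1
    rw [div_mul_eq_mul_div, le_div_iff₀ (by positivity)]
    nlinarith
  set E : X →L[ℂ] X := V.comp (S - S') with hEdef
  have hEnorm : ‖E‖ < 1 := by
    have hb : (3 / (2 * c)) * (c / 3) = 1 / 2 := by field_simp
    calc ‖E‖ ≤ ‖V‖ * ‖S - S'‖ := ContinuousLinearMap.opNorm_comp_le _ _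
      _ ≤ (3 / (2 * c)) * ‖S - S'‖ := mul_le_mul_of_nonneg_right hVnorm (norm_nonneg _)
      _ < (3 / (2 * c)) * (c / 3) := by
          exact mul_lt_mul_of_pos_left hnorm (by positivity)
      _ = 1 / 2 := hb
      _ < 1 := by norm_num
  have hunitE : IsUnit (1 + E) := by
    have : ‖-E‖ < 1 := by rwa [norm_neg]
    simpa [sub_neg_eq_add] using isUnit_one_sub_of_norm_lt_one this
  have hsurjE : Function.Surjective ⇑(1 + E) :=
    (ContinuousLinearMap.isUnit_iff_bijective.mp hunitE).2
  -- T = T' ∘ (1 + E)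
  have hTeq : T = T' + (S - S') := by rw [← hTT']; abel
  have hcomp : ∀ z : X, T z = T' ((1 + E) z) := by
    intro z
    have h1 : (1 + E) z = z + V ((S - S') z) := rfl
    rw [h1, map_add, hTV, hTeq]
    rfl
  intro y
  obtain ⟨x, hx⟩ := hsurj' y
  obtain ⟨z, hz⟩ := hsurjE x
  exact ⟨z, by rw [hcomp, hz, hx]⟩
end

section
/- Let X be a Banach space and A a closed subalgebra of B(X), with A⁺ = {T + λI : T ∈ A, λ ∈ ℂ}. If the pair (A, A⁺), where A acts on A⁺ by left multiplication, is surjunctive, then (A, X) is surjunctive. -/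
open scoped NNReal

/-- The sum of a closed submodule and the span of a single vector is closed. -/
lemma isClosed_add_span_singleton {E : Type*} [NormedAddCommGroup E] [NormedSpace ℂ E]
    (p : Submodule ℂ E) (hp : IsClosed (p : Set E)) (v : E) :
    IsClosed {x : E | ∃ s ∈ p, ∃ μ : ℂ, x = s + μ • v} := by
  haveI : IsClosed ((p : Set E)) := hp
  -- quotient by p
  let π : E →ₗ[ℂ] (E ⧸ p) := p.mkQ
  have hπcont : Continuous π := by
    refine AddMonoidHomClass.continuous_of_bound π.toAddMonoidHom 1 fun x => ?_
    simpa [π] using Submodule.Quotient.norm_mk_le p x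
  have hset : {x : E | ∃ s ∈ p, ∃ μ : ℂ, x = s + μ • v}
      = π ⁻¹' ((Submodule.span ℂ {π v} : Submodule ℂ (E ⧸ p)) : Set (E ⧸ p)) := by
    ext x
    simp only [Set.mem_setOf_eq, Set.mem_preimage, SetLike.mem_coe,
      Submodule.mem_span_singleton]
    constructor
    · rintro ⟨s, hs, μ, rfl⟩
      have hs0 : π s = 0 := (Submodule.Quotient.mk_eq_zero p).2 hs
      exact ⟨μ, by rw [map_add, map_smul, hs0, zero_add]⟩
    · rintro ⟨μ, hμ⟩
      refine ⟨x - μ • v, ?_, μ, by abel⟩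
      rw [← Submodule.Quotient.mk_eq_zero p]
      have : π (x - μ • v) = 0 := by
        rw [map_sub, map_smul, ← hμ, sub_self]
      simpa [π] using this
  rw [hset]
  exact (Submodule.closed_of_finiteDimensional
    (Submodule.span ℂ {π v})).preimage hπcont

/-- If `A` is a closed subalgebra of `B(X)` and the pair `(A, A⁺)` (with `A` acting on
`A⁺ = {S + μI : S ∈ A}` by left multiplication) is surjunctive, then `(A, X)` is
surjunctive: every `T ∈ A⁺` which is injective with closed range on `X` is surjective. -/
theorem surjunctive_of_self_action
    (X : Type*) [NormedAddCommGroup X] [NormedSpace ℂ X] [CompleteSpace X]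
    (A : NonUnitalSubalgebra ℂ (X →L[ℂ] X)) (hA : IsClosed (A : Set (X →L[ℂ] X)))
    (Aplus : Set (X →L[ℂ] X))
    (hAplus : Aplus = {T : X →L[ℂ] X | ∃ S ∈ A, ∃ μ : ℂ, T = S + μ • (1 : X →L[ℂ] X)})
    (h : ∀ T ∈ Aplus,
      (∀ S₁ ∈ Aplus, ∀ S₂ ∈ Aplus, T * S₁ = T * S₂ → S₁ = S₂) →
      IsClosed ((fun S => T * S) '' Aplus) →
      ∀ R ∈ Aplus, ∃ S ∈ Aplus, T * S = R)
    (T : X →L[ℂ] X) (hT : T ∈ Aplus)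
    (hinj : Function.Injective ⇑T) (hcl : IsClosed (Set.range ⇑T)) :
    Function.Surjective ⇑T := by
  -- `Aplus` is closed
  have hAplusClosed : IsClosed Aplus := by
    rw [hAplus]
    exact isClosed_add_span_singleton A.toSubmodule hA (1 : X →L[ℂ] X)
  -- `T` is antilipschitz: there is `c` with `‖x‖ ≤ c * ‖T x‖`
  have hrange : IsClosed ((T.range : Submodule ℂ X) : Set X) := by
    have : ((T.range : Submodule ℂ X) : Set X) = Set.range ⇑T :=
      LinearMap.coe_range _
    rwa [this]
  haveI : CompleteSpace (T.range) := hrange.completeSpace_coe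
  set T' : X →L[ℂ] T.range :=
    T.codRestrict (T.range) (fun x => LinearMap.mem_range_self _ x) with hT'
  have hker : T'.ker = ⊥ := by
    rw [hT', ContinuousLinearMap.ker_codRestrict]
    exact LinearMap.ker_eq_bot.2 hinj
  have hrange' : T'.range = ⊤ := by
    rw [LinearMap.range_eq_top]
    rintro ⟨y, x, rfl⟩
    exact ⟨x, rfl⟩
  let e := ContinuousLinearEquiv.ofBijective T' hker hrange'
  obtain ⟨c, hc⟩ : ∃ c : ℝ≥0, ∀ x : X, ‖x‖ ≤ (c : ℝ) * ‖T x‖ := by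
    obtain ⟨c, hea⟩ : ∃ c : NNReal, AntilipschitzWith c ⇑e := ⟨_, e.antilipschitz⟩
    refine ⟨c, fun x => ?_⟩
    have h2 := hea.le_mul_dist x 0
    have he : dist (e x) (e 0) = ‖T x‖ := by
      rw [map_zero, dist_zero_right]
      show ‖(T' x : X)‖ = ‖T x‖
      rw [ContinuousLinearMap.coe_codRestrict_apply]
    rwa [dist_zero_right, he] at h2
  -- left multiplication by `T` is antilipschitz
  have hanti : AntilipschitzWith c (fun S : X →L[ℂ] X => T * S) := by
    rw [antilipschitzWith_iff_le_mul_dist]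
    intro S₁ S₂
    have key : ∀ S : X →L[ℂ] X, ‖S‖ ≤ (c : ℝ) * ‖T * S‖ := by
      intro S
      refine ContinuousLinearMap.opNorm_le_bound S (by positivity) fun x => ?_
      calc ‖S x‖ ≤ (c : ℝ) * ‖T (S x)‖ := hc (S x)
        _ = (c : ℝ) * ‖(T * S) x‖ := by rfl
        _ ≤ (c : ℝ) * (‖T * S‖ * ‖x‖) :=
            mul_le_mul_of_nonneg_left ((T * S).le_opNorm x) c.coe_nonneg
        _ = (c : ℝ) * ‖T * S‖ * ‖x‖ := by ring
    have heq : T * S₁ - T * S₂ = T * (S₁ - S₂) := (mul_sub T S₁ S₂).symm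
    simp only [dist_eq_norm, heq]
    exact key (S₁ - S₂)
  have hlip : LipschitzWith ‖T‖₊ (fun S : X →L[ℂ] X => T * S) := by
    refine LipschitzWith.of_dist_le_mul fun S₁ S₂ => ?_
    have heq : T * S₁ - T * S₂ = T * (S₁ - S₂) := (mul_sub T S₁ S₂).symm
    simp only [dist_eq_norm, heq]
    exact ContinuousLinearMap.opNorm_comp_le T (S₁ - S₂)
  -- the image of `Aplus` under left multiplication is closed
  have himage : IsClosed ((fun S => T * S) '' Aplus) :=
    (hanti.isClosedEmbedding hlip.uniformContinuous).isClosedMap _ hAplusClosed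
  -- left multiplication is injective
  have hmul_inj : ∀ S₁ ∈ Aplus, ∀ S₂ ∈ Aplus, T * S₁ = T * S₂ → S₁ = S₂ := by
    intro S₁ _ S₂ _ hS
    ext x
    apply hinj
    have := ContinuousLinearMap.ext_iff.1 hS x
    simpa using this
  -- `1 ∈ Aplus`
  have h1 : (1 : X →L[ℂ] X) ∈ Aplus := by
    rw [hAplus]
    exact ⟨0, zero_mem A, 1, by simp⟩
  obtain ⟨S, _, hTS⟩ := h T hT hmul_inj himage 1 h1
  intro y
  refine ⟨S y, ?_⟩
  have := ContinuousLinearMap.ext_iff.1 hTS y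
  simpa using this
end

section
/- Let A be a directly finite unital Banach algebra, and let a ∈ A. Regard the dual space A* as a left A-module via (a·f)(x) = f(xa), and suppose the induced operator on A* given by a is injective. Then a is invertible in A. -/
/-- If `A` is a directly finite unital Banach algebra and the action of `a` on the dual
space `A*` (adjoint of right multiplication by `a`) is injective, then `a` is invertible. -/
theorem directlyFinite_dual_action_injective_isUnit
    (A : Type*) [NormedRing A] [NormedAlgebra ℂ A] [CompleteSpace A]
    (hdf : ∀ x y : A, x * y = 1 → y * x = 1) (a : A)
    (hinj : Function.Injective (fun (f : A →L[ℂ] ℂ) => (fun x : A => f (x * a)))) :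
    IsUnit a := by
  set S : Submodule ℂ A := (LinearMap.range (LinearMap.mulRight ℂ a)).topologicalClosure with hS
  have hmem : ∀ x : A, x * a ∈ S := fun x =>
    Submodule.le_topologicalClosure _ ⟨x, rfl⟩
  haveI hScl : IsClosed (S : Set A) := Submodule.isClosed_topologicalClosure _
  have htop : S = ⊤ := by
    by_contra h
    obtain ⟨z, hz⟩ : ∃ z : A, z ∉ S := by
      by_contra hc
      push_neg at hc
      exact h (Submodule.eq_top_iff'.2 hc)
    have hz' : (Submodule.Quotient.mk z : A ⧸ S) ≠ 0 := by
      simpa [Submodule.Quotient.mk_eq_zero] using hz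
    obtain ⟨g, hg⟩ := SeparatingDual.exists_eq_one (R := ℂ) hz'
    let mkC : A →L[ℂ] (A ⧸ S) :=
      LinearMap.mkContinuous S.mkQ 1 (fun m => by
        simpa using Submodule.Quotient.norm_mk_le S m)
    let f : A →L[ℂ] ℂ := g.comp mkC
    have hf0 : f = 0 := by
      apply hinj
      funext x
      have : (Submodule.Quotient.mk (x * a) : A ⧸ S) = 0 :=
        (Submodule.Quotient.mk_eq_zero S).2 (hmem x)
      simp only [f, mkC, ContinuousLinearMap.comp_apply, LinearMap.mkContinuous_apply,
        Submodule.mkQ_apply, this, map_zero, ContinuousLinearMap.zero_apply]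
    have : f z = 1 := by
      simpa [f, mkC] using hg
    rw [hf0] at this
    simp at this
  have h1 : (1 : A) ∈ closure (Set.range fun x : A => x * a) := by
    have : (1 : A) ∈ (S : Set A) := by rw [htop]; trivial
    rw [hS] at this
    simp only [Submodule.topologicalClosure_coe, LinearMap.coe_range] at this
    exact this
  obtain ⟨y, hy, x, hx⟩ := mem_closure_iff.1 h1 _ Units.isOpen isUnit_one
  rw [← hx] at hy
  have hu : IsUnit (x * a) := hy
  obtain ⟨u, hu'⟩ := hu
  have h2 : (↑u⁻¹ * x) * a = 1 := by
    rw [mul_assoc, ← hu', ← Units.val_mul, inv_mul_cancel, Units.val_one]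
  exact ⟨⟨a, ↑u⁻¹ * x, hdf _ _ h2, h2⟩, rfl⟩
end

section
/- Let A be a unital, directly finite C*-algebra and let a ∈ A. If the left multiplication operator L_a : A → A, L_a(x) = ax, is injective with closed range, then a is invertible in A (hence L_a is surjective). -/
open scoped NNReal

/-- In a unital directly finite C*-algebra, if left multiplication by `a` is injective
with closed range, then `a` is invertible. -/
theorem directlyFinite_cstar_leftMul_injective_closedRange_isUnit
    (A : Type*) [NormedRing A] [StarRing A] [CStarRing A] [NormedAlgebra ℂ A]
    [StarModule ℂ A] [CompleteSpace A]
    (hdf : ∀ x y : A, x * y = 1 → y * x = 1) (a : A)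
    (hinj : Function.Injective (fun x : A => a * x))
    (hcl : IsClosed (Set.range (fun x : A => a * x))) :
    IsUnit a := by
  letI : CStarAlgebra A := ⟨⟩
  letI := CStarAlgebra.spectralOrder A
  letI := CStarAlgebra.spectralOrderedRing A
  rcases subsingleton_or_nontrivial A with hA | hA
  · exact isUnit_of_subsingleton a
  -- the left multiplication operator
  set T : A →L[ℂ] A := ContinuousLinearMap.mul ℂ A a with hT
  have hTapp : ∀ x : A, T x = a * x := fun x => rfl
  have hrange : ((LinearMap.range (T : A →ₗ[ℂ] A) : Submodule ℂ A) : Set A) = Set.range (fun x : A => a * x) := by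
    ext y; simp [LinearMap.mem_range, hTapp]
  -- antilipschitz bound via the open mapping theorem
  have hclosed : IsClosed ((LinearMap.range (T : A →ₗ[ℂ] A) : Submodule ℂ A) : Set A) := hrange ▸ hcl
  haveI : CompleteSpace (LinearMap.range (T : A →ₗ[ℂ] A)) := hclosed.completeSpace_coe
  have hker : LinearMap.ker (T.rangeRestrict : A →ₗ[ℂ] LinearMap.range (T : A →ₗ[ℂ] A)) = ⊥ := by
    rw [ContinuousLinearMap.ker_codRestrict]
    exact LinearMap.ker_eq_bot_of_injective hinj
  have hsurj : LinearMap.range (T.rangeRestrict : A →ₗ[ℂ] LinearMap.range (T : A →ₗ[ℂ] A)) = ⊤ := by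
    rw [LinearMap.range_eq_top]
    rintro ⟨y, x, rfl⟩
    exact ⟨x, rfl⟩
  let e := ContinuousLinearEquiv.ofBijective T.rangeRestrict hker hsurj
  obtain ⟨c, hc⟩ : ∃ c : ℝ≥0, ∀ x : A, ‖x‖ ≤ c * ‖a * x‖ := by
    obtain ⟨K, hK⟩ : ∃ K, AntilipschitzWith K e := ⟨_, e.antilipschitz⟩
    refine ⟨K, fun x => ?_⟩
    have h1 : ((e x : LinearMap.range (T : A →ₗ[ℂ] A)) : A) = a * x := rfl
    calc ‖x‖ = dist x 0 := (dist_zero_right x).symm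
      _ ≤ K * dist (e x) (e 0) := hK.le_mul_dist x 0
      _ = K * ‖a * x‖ := by
          rw [map_zero e, dist_zero_right, ← Submodule.norm_coe (e x), h1]
  -- it suffices that `star a * a` is a unit
  set t : A := star a * a with ht'
  suffices hu : IsUnit t by
    obtain ⟨u, hu⟩ := hu
    rw [ht'] at hu
    refine ⟨⟨a, ↑u⁻¹ * star a, ?_, ?_⟩, rfl⟩
    · refine hdf _ _ ?_
      rw [mul_assoc, ← hu, Units.inv_mul]
    · rw [mul_assoc, ← hu, Units.inv_mul]
  by_contra hnu
  have h0 : (0 : ℝ) ∈ spectrum ℝ t := (spectrum.zero_mem_iff ℝ).mpr hnu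
  have htsa : IsSelfAdjoint t := IsSelfAdjoint.star_mul_self a
  have htnn : (0 : A) ≤ t := star_mul_self_nonneg a
  -- choose ε with c^2 * ε < 1
  set ε : ℝ := 1 / ((c : ℝ) ^ 2 + 1) with hε'
  have hεpos : 0 < ε := by positivity
  set f : ℝ → ℝ := fun s => max 0 (1 - s / ε) with hf'
  have hfc : Continuous f := by fun_prop
  set y : A := cfc f t with hy'
  -- lower bound for ‖y‖
  have hy1 : (1 : ℝ) ≤ ‖y‖ := by
    have h := norm_apply_le_norm_cfc f t h0 hfc.continuousOn htsa
    have hf0 : f 0 = 1 := by simp [hf']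
    rw [hf0] at h
    simpa [hy'] using h
  -- upper bound for ‖y‖
  have hyle : ‖y‖ ≤ 1 := by
    rw [hy']
    refine norm_cfc_le one_pos.le fun x hx => ?_
    have hx0 : 0 ≤ x := spectrum_nonneg_of_nonneg htnn hx
    have h1 : 0 ≤ f x := le_max_left _ _
    have h2 : f x ≤ 1 := by
      refine max_le one_pos.le ?_
      have : 0 ≤ x / ε := by positivity
      linarith
    rw [Real.norm_eq_abs, abs_of_nonneg h1]; exact h2
  -- bound on ‖t * y‖
  have hty : ‖t * y‖ ≤ ε := by
    have hmul : t * y = cfc (fun s : ℝ => s * f s) t := by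
      rw [hy', cfc_mul (fun s : ℝ => s) f t (continuous_id.continuousOn)
        (hfc.continuousOn), cfc_id' ℝ t]
    rw [hmul]
    refine norm_cfc_le hεpos.le fun x hx => ?_
    have hx0 : 0 ≤ x := spectrum_nonneg_of_nonneg htnn hx
    have h1 : 0 ≤ f x := le_max_left _ _
    rw [Real.norm_eq_abs, abs_of_nonneg (by positivity)]
    rcases le_or_gt x ε with h | h
    · have h2 : f x ≤ 1 := by
        refine max_le one_pos.le ?_
        have : 0 ≤ x / ε := by positivity
        linarith
      calc x * f x ≤ x * 1 := by nlinarith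
        _ ≤ ε := by linarith
    · have hfx : f x = 0 := by
        apply max_eq_left
        have : 1 ≤ x / ε := (one_le_div hεpos).mpr h.le
        linarith
      simp [hfx, hεpos.le]
  -- bound on ‖a * y‖ ^ 2
  have hay2 : ‖a * y‖ ^ 2 ≤ ε := by
    have h1 : ‖a * y‖ ^ 2 = ‖star (a * y) * (a * y)‖ := by
      rw [CStarRing.norm_star_mul_self, sq]
    have h2 : star (a * y) * (a * y) = star y * (t * y) := by
      rw [ht']; simp only [star_mul]; noncomm_ring
    calc ‖a * y‖ ^ 2 = ‖star y * (t * y)‖ := by rw [h1, h2]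
      _ ≤ ‖star y‖ * ‖t * y‖ := norm_mul_le _ _
      _ ≤ 1 * ε := by
          rw [norm_star]
          exact mul_le_mul hyle hty (norm_nonneg _) one_pos.le
      _ = ε := one_mul ε
  -- contradiction
  have hb : (1 : ℝ) ≤ (c : ℝ) ^ 2 * ‖a * y‖ ^ 2 := by
    have := hc y
    nlinarith [norm_nonneg (a * y), c.coe_nonneg]
  have hle : (c : ℝ) ^ 2 * ‖a * y‖ ^ 2 ≤ (c : ℝ) ^ 2 * ε := by
    have := sq_nonneg (c : ℝ); nlinarith
  have hlt : (c : ℝ) ^ 2 * ε < 1 := by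
    rw [hε', mul_one_div, div_lt_one (by positivity)]
    linarith
  linarith
end

section
/- Every unital directly finite C*-algebra A, acting on itself by left multiplication, forms a surjunctive pair: every element of A has empty residual spectrum as an operator on the Banach space A. -/
/-- An injective continuous linear map with closed range between Banach spaces is
bounded below. -/
lemma aux_bounded_below {E : Type*} [NormedAddCommGroup E] [NormedSpace ℂ E]
    [CompleteSpace E] (f : E →L[ℂ] E) (hinj : Function.Injective f)
    (hcl : IsClosed (Set.range f)) :
    ∃ K : ℝ, 0 ≤ K ∧ ∀ x : E, ‖x‖ ≤ K * ‖f x‖ := by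
  have hcl' : IsClosed ((LinearMap.range (f : E →ₗ[ℂ] E) : Submodule ℂ E) : Set E) := by
    have : ((LinearMap.range (f : E →ₗ[ℂ] E) : Submodule ℂ E) : Set E) = Set.range ⇑f := by
      ext x
      simp [LinearMap.mem_range]
    rw [this]
    exact hcl
  haveI : CompleteSpace (LinearMap.range (f : E →ₗ[ℂ] E)) := hcl'.completeSpace_coe
  let g : E →L[ℂ] (LinearMap.range (f : E →ₗ[ℂ] E)) :=
    f.codRestrict (LinearMap.range (f : E →ₗ[ℂ] E)) (fun x => LinearMap.mem_range_self _ x)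
  have hker : LinearMap.ker (g : E →ₗ[ℂ] LinearMap.range (f : E →ₗ[ℂ] E)) = ⊥ := by
    ext x
    simp only [LinearMap.mem_ker, Submodule.mem_bot]
    constructor
    · intro hx
      apply hinj
      have := congrArg (Subtype.val) hx
      simpa [g] using this
    · rintro rfl
      simp
  have hrange : LinearMap.range (g : E →ₗ[ℂ] LinearMap.range (f : E →ₗ[ℂ] E)) = ⊤ := by
    rw [LinearMap.range_eq_top]
    rintro ⟨y, x, rfl⟩
    exact ⟨x, rfl⟩
  let e := ContinuousLinearEquiv.ofBijective g hker hrange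
  obtain ⟨K, hK⟩ : ∃ K : NNReal, AntilipschitzWith K e := ⟨_, e.antilipschitz⟩
  refine ⟨K, K.coe_nonneg, fun x => ?_⟩
  have h1 := hK.le_mul_dist x 0
  simpa [e, g, dist_eq_norm, ContinuousLinearEquiv.ofBijective] using h1


/-- If left multiplication by `b` is bounded below in a C*-algebra, then `star b * b`
is a unit. -/
lemma aux_isUnit_star_mul_self {A : Type*} [CStarAlgebra A] (b : A) (K : ℝ)
    (hKb : ∀ x : A, ‖x‖ ≤ K * ‖b * x‖) : IsUnit (star b * b) := by
  set h : A := star b * b with hh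
  have hsa : IsSelfAdjoint h := IsSelfAdjoint.star_mul_self b
  rw [← spectrum.zero_notMem_iff ℝ]
  intro h0
  obtain ⟨n, hn⟩ : ∃ n : ℝ, n = K ^ 2 + 1 := ⟨_, rfl⟩
  have hnpos : 0 < n := by rw [hn]; positivity
  set fn : ℝ → ℝ := fun t => max (1 - n * t) 0 with hfn
  have hfnc : Continuous fn := by
    apply Continuous.max _ continuous_const
    fun_prop
  set x : A := cfc fn h with hx
  have hx1 : ‖x‖ ≤ 1 := by
    apply norm_cfc_le zero_le_one
    intro t ht
    have ht0 : 0 ≤ t := spectrum_star_mul_self_nonneg t ht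
    rw [Real.norm_eq_abs, abs_le]
    constructor
    · nlinarith [le_max_right (1 - n * t) (0:ℝ)]
    · rcases le_total (1 - n * t) 0 with hc | hc
      · simp [hfn, max_eq_right hc]
      · rw [hfn]
        simp only [max_eq_left hc]
        nlinarith
  have hx2 : (1 : ℝ) ≤ ‖x‖ := by
    have := norm_apply_le_norm_cfc fn h h0 (hfnc.continuousOn) hsa
    simpa [hfn] using this
  have hhx : ‖h * x‖ ≤ 1 / n := by
    have hmul : h * x = cfc (fun t : ℝ => t * fn t) h := by
      conv_lhs => rw [← cfc_id ℝ h hsa, hx]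
      rw [← cfc_mul _ _ h]
      simp only [id_eq]
    rw [hmul]
    apply norm_cfc_le (by positivity)
    intro t ht
    have ht0 : 0 ≤ t := spectrum_star_mul_self_nonneg t ht
    rw [Real.norm_eq_abs]
    rcases le_total (1 - n * t) 0 with hc | hc
    · simp only [hfn, max_eq_right hc, mul_zero, abs_zero]
      positivity
    · simp only [hfn, max_eq_left hc]
      rw [abs_of_nonneg (by nlinarith)]
      rw [div_eq_inv_mul, mul_one]
      have h1 : t * (1 - n * t) ≤ t := by nlinarith [mul_nonneg (mul_nonneg hnpos.le ht0) ht0]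
      have h2 : t ≤ n⁻¹ := by
        nlinarith [mul_inv_cancel₀ hnpos.ne', mul_nonneg hnpos.le ht0]
      linarith
  -- derive the contradiction
  have e1 : ‖b * x‖ * ‖b * x‖ = ‖star x * (h * x)‖ := by
    rw [← CStarRing.norm_star_mul_self]
    congr 1
    simp only [hh, star_mul, mul_assoc]
  have e2 : ‖star x * (h * x)‖ ≤ ‖x‖ * ‖h * x‖ := by
    calc ‖star x * (h * x)‖ ≤ ‖star x‖ * ‖h * x‖ := norm_mul_le _ _
      _ = ‖x‖ * ‖h * x‖ := by rw [norm_star]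
  have e3 : ‖x‖ ≤ K * ‖b * x‖ := hKb x
  have e4 : (0:ℝ) ≤ ‖b * x‖ := norm_nonneg _
  have e5 : (0:ℝ) ≤ ‖h * x‖ := norm_nonneg _
  have key : 1 ≤ K ^ 2 * (1 / n) := by
    nlinarith [mul_le_mul e3 e3 (norm_nonneg x) (le_trans (norm_nonneg x) e3),
      mul_le_mul hx1 hhx e5 zero_le_one]
  rw [div_eq_inv_mul, mul_one] at key
  have key2 : n * 1 ≤ n * (K ^ 2 * n⁻¹) := mul_le_mul_of_nonneg_left key hnpos.le
  have key3 : n * (K ^ 2 * n⁻¹) = K ^ 2 := by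
    field_simp
  rw [key3, mul_one] at key2
  rw [hn] at key2
  linarith

/-- A unital directly finite C*-algebra acting on itself by left multiplication forms a
surjunctive pair: each left multiplication operator `L_a` has empty residual spectrum. -/
theorem directlyFinite_cstar_residual_spectrum_empty
    (A : Type*) [NormedRing A] [StarRing A] [CStarRing A] [NormedAlgebra ℂ A]
    [StarModule ℂ A] [CompleteSpace A]
    (hdf : ∀ x y : A, x * y = 1 → y * x = 1) (a : A) :
    {μ : ℂ | μ ∈ spectrum ℂ (ContinuousLinearMap.mul ℂ A a) ∧
      Function.Injective ⇑(ContinuousLinearMap.mul ℂ A a - μ • (1 : A →L[ℂ] A)) ∧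
      IsClosed (Set.range ⇑(ContinuousLinearMap.mul ℂ A a - μ • (1 : A →L[ℂ] A)))} = ∅ := by
  ext μ
  simp only [Set.mem_setOf_eq, Set.mem_empty_iff_false, iff_false, not_and]
  intro hμ hinj hcl
  set b : A := a - μ • 1 with hb
  set f := ContinuousLinearMap.mul ℂ A a - μ • (1 : A →L[ℂ] A) with hf
  have hfb : ∀ x : A, f x = b * x := by
    intro x
    simp [hf, hb, sub_mul, smul_mul_assoc]
  obtain ⟨K, hK0, hK⟩ := aux_bounded_below f hinj hcl
  have hKb : ∀ x : A, ‖x‖ ≤ K * ‖b * x‖ := fun x => (hfb x) ▸ hK x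
  -- the element `star b * b` is a unit
  set h : A := star b * b with hh
  have hunit : IsUnit h := by
    letI : CStarAlgebra A := {}
    exact aux_isUnit_star_mul_self b K hKb
  -- hence `b` is a unit
  obtain ⟨u, hu⟩ := hunit
  have hleft : (↑u⁻¹ * star b) * b = 1 := by
    rw [mul_assoc, ← hh, ← hu, Units.inv_mul]
  have hright : b * (↑u⁻¹ * star b) = 1 := hdf _ _ hleft
  -- hence `f` is a unit, contradicting `μ ∈ spectrum`
  have hfunit : IsUnit f := by
    set c : A := ↑u⁻¹ * star b with hc
    refine ⟨⟨f, ContinuousLinearMap.mul ℂ A c, ?_, ?_⟩, rfl⟩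
    · ext x
      simp only [ContinuousLinearMap.coe_mul, Function.comp_apply,
        ContinuousLinearMap.one_apply, ContinuousLinearMap.mul_apply', mul_apply_eq_comp, hfb]
      rw [← mul_assoc, hright, one_mul]
    · ext x
      simp only [ContinuousLinearMap.coe_mul, Function.comp_apply,
        ContinuousLinearMap.one_apply, ContinuousLinearMap.mul_apply', mul_apply_eq_comp, hfb]
      rw [← mul_assoc, hleft, one_mul]
  rw [spectrum.mem_iff] at hμ
  apply hμ
  have : algebraMap ℂ (A →L[ℂ] A) μ - ContinuousLinearMap.mul ℂ A a = -f := by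
    rw [hf, neg_sub]
    congr 1
  rw [this]
  exact hfunit.neg
end

section
/- The group von Neumann algebra VN(Γ) of a discrete group Γ is directly finite: if S, T ∈ VN(Γ) satisfy S T = I, then T S = I. -/
open scoped ENNReal

set_option maxHeartbeats 1000000

variable (G : Type*) [Group G]

lemma memℓp_rightTranslate (g : G) (f : lp (fun _ : G => ℂ) 2) :
    Memℓp (fun h : G => f (h * g)) 2 := by
  apply memℓp_gen
  have hs : Summable fun h : G => ‖f h‖ ^ (2 : ℝ≥0∞).toReal :=
    (lp.memℓp f).summable (by norm_num)
  exact (Equiv.mulRight g).summable_iff.mpr hs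

/-- Right translation by `g` on `ℓ²(G)`: `(ρ_g f)(h) = f (h * g)`. -/
noncomputable def lpRightTranslate (g : G) :
    lp (fun _ : G => ℂ) 2 →L[ℂ] lp (fun _ : G => ℂ) 2 :=
  LinearMap.mkContinuous
    { toFun := fun f => ⟨fun h : G => f (h * g), memℓp_rightTranslate G g f⟩
      map_add' := by
        intro f f'
        exact Subtype.ext (funext fun h : G => by
          simp only [lp.coeFn_add, Pi.add_apply])
      map_smul' := by
        intro c f
        exact Subtype.ext (funext fun h : G => by
          simp only [lp.coeFn_smul, Pi.smul_apply, RingHom.id_apply]) }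
    1 (fun f => by
      rw [one_mul]
      apply le_of_eq
      rw [lp.norm_eq_tsum_rpow (by norm_num : 0 < (2 : ℝ≥0∞).toReal),
        lp.norm_eq_tsum_rpow (by norm_num : 0 < (2 : ℝ≥0∞).toReal) f]
      congr 1
      exact Equiv.tsum_eq (Equiv.mulRight g) (fun h => ‖f h‖ ^ (2 : ℝ≥0∞).toReal))

/-- The group von Neumann algebra `VN(G)` realized as the commutant of the right regular
representation inside `B(ℓ²(G))`. -/
def groupVonNeumannAlgebra :
    Set (lp (fun _ : G => ℂ) 2 →L[ℂ] lp (fun _ : G => ℂ) 2) :=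
  {T | ∀ g : G, T * lpRightTranslate G g = lpRightTranslate G g * T}

open scoped ComplexConjugate

namespace GroupVNAux

variable {G : Type*} [Group G] [DecidableEq G]

local notation "H" => lp (fun _ : G => ℂ) 2

noncomputable def delta (g : G) : lp (fun _ : G => ℂ) 2 := lp.single 2 g (1 : ℂ)

lemma rt_apply (g : G) (f : lp (fun _ : G => ℂ) 2) (h : G) :
    lpRightTranslate G g f h = f (h * g) := rfl

lemma rt_delta (g k : G) :
    lpRightTranslate G g (delta k) = delta (k * g⁻¹) := by
  apply lp.ext
  funext h
  rw [rt_apply]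
  by_cases hc : h = k * g⁻¹
  · subst hc
    rw [delta, delta, lp.single_apply_self, show k * g⁻¹ * g = k by group,
      lp.single_apply_self]
  · rw [delta, delta, lp.single_apply_ne _ _ _ hc, lp.single_apply_ne]
    intro he
    exact hc (by rw [← he]; group)

lemma delta_expand (f : lp (fun _ : G => ℂ) 2) :
    HasSum (fun g : G => f g • delta g) f := by
  have h := lp.hasSum_single (E := fun _ : G => ℂ) ENNReal.ofNat_ne_top f
  refine h.congr_fun fun g => ?_
  rw [delta, ← lp.single_smul, smul_eq_mul, mul_one]

lemma inner_delta_left (g : G) (f : lp (fun _ : G => ℂ) 2) :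
    inner (𝕜 := ℂ) (delta g) f = f g := by
  rw [delta, lp.inner_single_left]
  simp [RCLike.inner_apply]

end GroupVNAux
set_option linter.unusedSectionVars false

namespace GroupVNAux

variable {G : Type*} [Group G] [DecidableEq G]

noncomputable def tau (A : lp (fun _ : G => ℂ) 2 →L[ℂ] lp (fun _ : G => ℂ) 2) : ℂ :=
  inner (𝕜 := ℂ) (delta 1) (A (delta 1))

lemma mem_apply_delta {A : lp (fun _ : G => ℂ) 2 →L[ℂ] lp (fun _ : G => ℂ) 2}
    (hA : A ∈ groupVonNeumannAlgebra G) (g : G) :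
    A (delta g) = lpRightTranslate G g⁻¹ (A (delta 1)) := by
  have h1 : delta (G := G) g = lpRightTranslate G g⁻¹ (delta 1) := by
    rw [rt_delta]; simp
  rw [h1]
  have := ContinuousLinearMap.ext_iff.mp (hA g⁻¹) (delta 1)
  simpa [ContinuousLinearMap.mul_apply] using this

lemma tau_mul_eq_tsum {A B : lp (fun _ : G => ℂ) 2 →L[ℂ] lp (fun _ : G => ℂ) 2}
    (hA : A ∈ groupVonNeumannAlgebra G) :
    tau (A * B) = ∑' g : G, (B (delta 1)) g * (A (delta 1)) g⁻¹ := by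
  set b : lp (fun _ : G => ℂ) 2 := B (delta 1) with hbdef
  have hb : HasSum (fun g : G => b g • delta g) b := delta_expand b
  have h2 : HasSum (fun g : G => b g • A (delta g)) (A b) := by
    have := A.hasSum hb
    simpa only [map_smul] using this
  have h3 : HasSum (fun g : G => inner (𝕜 := ℂ) (delta (1:G)) (b g • A (delta g)))
      (inner (𝕜 := ℂ) (delta (1:G)) (A b)) := (innerSL ℂ (delta (1:G))).hasSum h2
  have h4 : (fun g : G => inner (𝕜 := ℂ) (delta (1:G)) (b g • A (delta g)))
      = fun g : G => b g * (A (delta 1)) g⁻¹ := by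
    funext g
    rw [inner_smul_right, mem_apply_delta hA, inner_delta_left, rt_apply, one_mul]
  rw [h4] at h3
  rw [tau, ContinuousLinearMap.mul_apply, ← hbdef]
  exact h3.tsum_eq.symm

lemma tau_mul_comm {A B : lp (fun _ : G => ℂ) 2 →L[ℂ] lp (fun _ : G => ℂ) 2}
    (hA : A ∈ groupVonNeumannAlgebra G) (hB : B ∈ groupVonNeumannAlgebra G) :
    tau (A * B) = tau (B * A) := by
  rw [tau_mul_eq_tsum hA, tau_mul_eq_tsum hB]
  rw [← Equiv.tsum_eq (Equiv.inv G) (fun g => (A (delta (1:G))) g * (B (delta 1)) g⁻¹)]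
  simp only [Equiv.inv_apply, inv_inv]
  exact tsum_congr fun g => mul_comm _ _

lemma eq_zero_of_mem_of_delta_one {A : lp (fun _ : G => ℂ) 2 →L[ℂ] lp (fun _ : G => ℂ) 2}
    (hA : A ∈ groupVonNeumannAlgebra G) (h0 : A (delta 1) = 0) : A = 0 := by
  ext f
  have h2 : HasSum (fun g : G => f g • A (delta g)) (A f) := by
    have := A.hasSum (delta_expand f)
    simpa only [map_smul] using this
  have h3 : (fun g : G => f g • A (delta g)) = fun _ : G => (0 : lp (fun _ : G => ℂ) 2) := by
    funext g
    rw [mem_apply_delta hA, h0, map_zero, smul_zero]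
  rw [h3] at h2
  have := h2.tsum_eq
  rw [tsum_zero] at this
  simp [← this]

lemma tau_one : tau (G := G) 1 = 1 := by
  rw [tau, ContinuousLinearMap.one_apply, inner_delta_left, delta, lp.single_apply_self]

end GroupVNAux
namespace GroupVNAux

variable {G : Type*} [Group G] [DecidableEq G]

lemma inner_rt (g : G) (x y : lp (fun _ : G => ℂ) 2) :
    inner (𝕜 := ℂ) (lpRightTranslate G g x) y
      = inner (𝕜 := ℂ) x (lpRightTranslate G g⁻¹ y) := by
  rw [lp.inner_eq_tsum, lp.inner_eq_tsum, ← Equiv.tsum_eq (Equiv.mulRight g⁻¹)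
    (fun h => inner (𝕜 := ℂ) ((lpRightTranslate G g x) h) (y h))]
  refine tsum_congr fun h => ?_
  rw [rt_apply, rt_apply]
  simp [inv_mul_cancel_right]

lemma mem_mul {A B : lp (fun _ : G => ℂ) 2 →L[ℂ] lp (fun _ : G => ℂ) 2}
    (hA : A ∈ groupVonNeumannAlgebra G) (hB : B ∈ groupVonNeumannAlgebra G) :
    A * B ∈ groupVonNeumannAlgebra G := by
  intro g
  rw [mul_assoc, hB g, ← mul_assoc, hA g, mul_assoc]

end GroupVNAux

open GroupVNAux in
/-- (Kaplansky) The group von Neumann algebra of a discrete group is directly finite. -/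
theorem groupVonNeumannAlgebra_directlyFinite
    (S T : lp (fun _ : G => ℂ) 2 →L[ℂ] lp (fun _ : G => ℂ) 2)
    (hS : S ∈ groupVonNeumannAlgebra G) (hT : T ∈ groupVonNeumannAlgebra G)
    (hST : S * T = 1) : T * S = 1 := by
  classical
  set P : lp (fun _ : G => ℂ) 2 →L[ℂ] lp (fun _ : G => ℂ) 2 := T * S with hPdef
  have hP : P * P = P := by
    rw [hPdef, mul_assoc, ← mul_assoc S T S, hST, one_mul]
  have memP : P ∈ groupVonNeumannAlgebra G := mem_mul hT hS
  set K : Submodule ℂ (lp (fun _ : G => ℂ) 2) := (LinearMap.range (P : lp (fun _ : G => ℂ) 2 →ₗ[ℂ] lp (fun _ : G => ℂ) 2)).topologicalClosure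
    with hKdef
  haveI : CompleteSpace K := (LinearMap.range (P : lp (fun _ : G => ℂ) 2 →ₗ[ℂ] lp (fun _ : G => ℂ) 2)).isClosed_topologicalClosure.completeSpace_coe
  set Q : lp (fun _ : G => ℂ) 2 →L[ℂ] lp (fun _ : G => ℂ) 2 :=
    K.subtypeL ∘L K.orthogonalProjectionOnto with hQdef
  have hQapply : ∀ x, Q x = (K.orthogonalProjectionOnto x : lp (fun _ : G => ℂ) 2) := fun x => rfl
  have hQmem : ∀ x, Q x ∈ K := fun x => (K.orthogonalProjectionOnto x).2
  have hQfix : ∀ x ∈ K, Q x = x := by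
    intro x hx
    rw [hQapply]
    exact K.starProjection_eq_self_iff.mpr hx
  have hrange : ∀ x, P x ∈ K := fun x =>
    (LinearMap.range (P : lp (fun _ : G => ℂ) 2 →ₗ[ℂ] lp (fun _ : G => ℂ) 2)).le_topologicalClosure (LinearMap.mem_range_self (P : lp (fun _ : G => ℂ) 2 →ₗ[ℂ] lp (fun _ : G => ℂ) 2) x)
  have hKinv : ∀ (g : G), ∀ x ∈ K, lpRightTranslate G g x ∈ K := by
    intro g
    have hle : K ≤ K.comap (lpRightTranslate G g : lp (fun _ : G => ℂ) 2 →ₗ[ℂ] lp (fun _ : G => ℂ) 2) := by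
      apply Submodule.topologicalClosure_minimal
      · rintro _ ⟨y, rfl⟩
        have := ContinuousLinearMap.ext_iff.mp (memP g) y
        simp only [ContinuousLinearMap.mul_apply] at this
        exact Submodule.mem_comap.mpr (this ▸ hrange (lpRightTranslate G g y))
      · exact IsClosed.preimage (lpRightTranslate G g).continuous
          (LinearMap.range (P : lp (fun _ : G => ℂ) 2 →ₗ[ℂ] lp (fun _ : G => ℂ) 2)).isClosed_topologicalClosure
    exact fun x hx => hle hx
  have memQ : Q ∈ groupVonNeumannAlgebra G := by
    intro g
    ext x
    simp only [ContinuousLinearMap.mul_apply]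
    have : (K.orthogonalProjectionOnto (lpRightTranslate G g x) : lp (fun _ : G => ℂ) 2)
        = lpRightTranslate G g (Q x) := by
      apply Submodule.eq_starProjection_of_mem_of_inner_eq_zero
      · exact hKinv g _ (hQmem x)
      · intro w hw
        rw [← map_sub, inner_rt]
        have horth : x - Q x ∈ Kᗮ := by
          rw [hQapply]
          exact K.sub_starProjection_mem_orthogonal x
        exact (Submodule.mem_orthogonal' K _).mp horth _ (hKinv g⁻¹ w hw)
    rw [hQapply, this]
  have hPfix : ∀ x ∈ K, P x = x := by
    intro x hx
    have hsub : (K : Set (lp (fun _ : G => ℂ) 2)) ⊆ {x | P x = x} := by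
      rw [hKdef, Submodule.topologicalClosure_coe]
      apply closure_minimal
      · rintro _ ⟨y, rfl⟩
        have := ContinuousLinearMap.ext_iff.mp hP y
        simpa only [ContinuousLinearMap.mul_apply, ContinuousLinearMap.coe_coe,
          Set.mem_setOf_eq] using this
      · exact isClosed_eq P.continuous continuous_id
    exact hsub hx
  have hPQ : P * Q = Q := by
    refine ContinuousLinearMap.ext fun x => ?_
    simp only [ContinuousLinearMap.mul_apply]
    exact hPfix (Q x) (hQmem x)
  have hQP : Q * P = P := by
    refine ContinuousLinearMap.ext fun x => ?_
    simp only [ContinuousLinearMap.mul_apply]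
    exact hQfix (P x) (hrange x)
  have hQQ : Q * Q = Q := by
    refine ContinuousLinearMap.ext fun x => ?_
    simp only [ContinuousLinearMap.mul_apply]
    exact hQfix (Q x) (hQmem x)
  have htauP : tau P = 1 := by
    have h1 : tau (T * S) = tau (S * T) := tau_mul_comm hT hS
    rw [hPdef, h1, hST, tau_one]
  have htauQ : tau Q = 1 := by
    have := tau_mul_comm memP memQ
    rw [hPQ, hQP] at this
    rw [this, htauP]
  -- now R = 1 - Q is a selfadjoint idempotent in the commutant with trace 0
  set R : lp (fun _ : G => ℂ) 2 →L[ℂ] lp (fun _ : G => ℂ) 2 := 1 - Q with hRdef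
  have memR : R ∈ groupVonNeumannAlgebra G := by
    intro g
    rw [hRdef, sub_mul, mul_sub, one_mul, mul_one, memQ g]
  have hRR : R * R = R := by
    rw [hRdef, sub_mul, one_mul, mul_sub, mul_one, hQQ, sub_self, sub_zero]
  have hRsa : IsSelfAdjoint R := by
    rw [hRdef]
    exact IsSelfAdjoint.sub (IsSelfAdjoint.one _) (isSelfAdjoint_starProjection K)
  have htauR : tau R = 0 := by
    rw [tau, hRdef, ContinuousLinearMap.sub_apply, ContinuousLinearMap.one_apply,
      inner_sub_right]
    have h1 : inner (𝕜 := ℂ) (delta (1 : G)) (delta (1 : G)) = 1 := by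
      rw [inner_delta_left, delta, lp.single_apply_self]
    rw [h1]
    have h2 : inner (𝕜 := ℂ) (delta (1 : G)) (Q (delta 1)) = tau Q := rfl
    rw [h2, htauQ, sub_self]
  have hRsym := (ContinuousLinearMap.isSelfAdjoint_iff_isSymmetric.mp hRsa)
  have hR0 : R (delta 1) = 0 := by
    have hinner : inner (𝕜 := ℂ) (R (delta (1 : G))) (R (delta 1)) = 0 := by
      have h5 : inner (𝕜 := ℂ) (R (delta (1 : G))) (R (delta 1))
          = inner (𝕜 := ℂ) (delta (1 : G)) (R (R (delta 1))) := hRsym _ _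
      rw [h5]
      have : R (R (delta (1 : G))) = R (delta 1) := by
        have := ContinuousLinearMap.ext_iff.mp hRR (delta (1 : G))
        simpa only [ContinuousLinearMap.mul_apply] using this
      rw [this]
      exact htauR
    exact inner_self_eq_zero.mp hinner
  have hRzero : R = 0 := eq_zero_of_mem_of_delta_one memR hR0
  have hQ1 : Q = 1 := by
    have := sub_eq_zero.mp (hRdef ▸ hRzero)
    exact this.symm
  rw [hPdef] at hPQ
  rw [hQ1, mul_one] at hPQ
  exact hPQ
end

section
/- Let H be an infinite-dimensional Banach space. The unitization K(H)⁺ = {K + λI : K compact, λ ∈ ℂ} of the compact operators is directly finite: if S, T ∈ K(H)⁺ satisfy S T = I, then T S = I. -/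
open Filter Topology Metric

section Aux

variable {X : Type*} [NormedAddCommGroup X] [NormedSpace ℂ X]

lemma aux_compact_ball (C : X →L[ℂ] X) (hC : IsCompactOperator ⇑C) :
    IsCompact (closure (⇑C '' Metric.closedBall 0 1)) :=
  IsCompactOperator.isCompact_closure_image_closedBall (𝕜₁ := ℂ)
    (f := (C : X →ₗ[ℂ] X)) hC 1

lemma aux_bddBelow [CompleteSpace X] (C : X →L[ℂ] X) (hC : IsCompactOperator ⇑C)
    (hinj : Function.Injective ⇑(1 + C)) :
    ∃ c : ℝ, 0 < c ∧ ∀ x, c * ‖x‖ ≤ ‖(1 + C) x‖ := by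
  by_contra h
  push_neg at h
  have hu : ∀ n : ℕ, ∃ u : X, ‖u‖ = 1 ∧ ‖(1 + C) u‖ ≤ 1 / (n + 1) := by
    intro n
    obtain ⟨x, hx⟩ := h (1 / (n + 1)) (by positivity)
    have hx0 : x ≠ 0 := by
      rintro rfl; simp at hx
    have hnx : ‖x‖ ≠ 0 := norm_ne_zero_iff.2 hx0
    refine ⟨(‖x‖ : ℂ)⁻¹ • x, ?_, ?_⟩
    · simp [norm_smul, abs_of_nonneg (norm_nonneg x), inv_mul_cancel₀ hnx]
    · rw [map_smul, norm_smul]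
      simp only [norm_inv, Complex.norm_real, Real.norm_eq_abs, abs_of_nonneg (norm_nonneg x)]
      rw [inv_mul_le_iff₀ (by positivity)]
      nlinarith [hx.le, norm_nonneg x]
  choose u hu1 hu2 using hu
  have humem : ∀ n, C (u n) ∈ closure (⇑C '' Metric.closedBall 0 1) :=
    fun n => subset_closure ⟨u n, by simp [hu1 n], rfl⟩
  obtain ⟨y, -, φ, hφ, hconv⟩ := (aux_compact_ball C hC).tendsto_subseq humem
  have h1 : Tendsto (fun n => (1 + C) (u (φ n))) atTop (𝓝 0) := by
    apply squeeze_zero_norm (a := fun n : ℕ => 1 / (n + 1))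
    · intro n
      refine (hu2 (φ n)).trans ?_
      have hn : (n : ℝ) ≤ (φ n : ℝ) := Nat.cast_le.2 hφ.le_apply
      gcongr
    · exact tendsto_one_div_add_atTop_nhds_zero_nat
  have h2 : Tendsto (fun n => u (φ n)) atTop (𝓝 (-y)) := by
    have : (fun n => u (φ n)) = fun n => (1 + C) (u (φ n)) - C (u (φ n)) := by
      funext n; simp
    rw [this]
    simpa using h1.sub hconv
  have hny : ‖(-y : X)‖ = 1 := by
    have := (continuous_norm.tendsto (-y : X)).comp h2
    have h1' : Tendsto (fun n : ℕ => (1 : ℝ)) atTop (𝓝 ‖(-y : X)‖) := by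
      simpa only [Function.comp_def, hu1] using this
    exact (tendsto_nhds_unique tendsto_const_nhds h1').symm
  have hy0 : (1 + C) (-y) = 0 := by
    have h3 := ((1 + C).continuous.tendsto (-y)).comp h2
    exact tendsto_nhds_unique (by simpa [Function.comp_def, Pi.add_apply] using h3) h1
  have : (-y : X) = 0 := hinj (by simpa using hy0)
  rw [this] at hny
  simp at hny

lemma aux_closed_map [CompleteSpace X] (F : X →L[ℂ] X) {c : ℝ} (hc : 0 < c)
    (hbd : ∀ x, c * ‖x‖ ≤ ‖F x‖) (Y : Submodule ℂ X) (hY : IsClosed (Y : Set X)) :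
    IsClosed ((Y.map (F : X →ₗ[ℂ] X)) : Set X) := by
  have : CompleteSpace Y := hY.completeSpace_coe
  set G : Y →L[ℂ] X := F.comp Y.subtypeL with hG
  have hanti : AntilipschitzWith ⟨c, hc.le⟩⁻¹ ⇑G := by
    apply G.antilipschitz_of_bound
    intro y
    change ‖y‖ ≤ c⁻¹ * ‖G y‖
    rw [le_inv_mul_iff₀ (by exact_mod_cast hc)]
    exact_mod_cast hbd (y : X)
  have hcl : IsClosed (Set.range ⇑G) := hanti.isClosed_range G.uniformContinuous
  have : Set.range ⇑G = ((Y.map (F : X →ₗ[ℂ] X)) : Set X) := by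
    ext x
    simp only [Set.mem_range, Submodule.map_coe, Set.mem_image, SetLike.mem_coe]
    constructor
    · rintro ⟨y, rfl⟩; exact ⟨y, y.2, rfl⟩
    · rintro ⟨y, hy, rfl⟩; exact ⟨⟨y, hy⟩, rfl⟩
  rwa [this] at hcl

-- Riesz-type choice: in a closed submodule Y with closed proper submodule Z < Y,
-- find a unit vector in Y at distance ≥ 1/2 from Z
lemma aux_riesz (Y Z : Submodule ℂ X) (hZY : Z < Y) (hZc : IsClosed (Z : Set X)) :
    ∃ u : X, u ∈ Y ∧ ‖u‖ = 1 ∧ ∀ z ∈ Z, (1:ℝ)/2 ≤ ‖u - z‖ := by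
  set Z' : Submodule ℂ Y := Z.comap Y.subtype with hZ'
  have hZ'c : IsClosed (Z' : Set Y) := by
    have : (Z' : Set Y) = (Y.subtype) ⁻¹' (Z : Set X) := rfl
    rw [this]
    exact hZc.preimage continuous_subtype_val
  obtain ⟨v, hvY, hvZ⟩ := SetLike.exists_of_lt hZY
  have hex : ∃ x : Y, x ∉ Z' := ⟨⟨v, hvY⟩, fun h => hvZ h⟩
  obtain ⟨x₀, hx₀, hdist⟩ := riesz_lemma (𝕜 := ℂ) hZ'c hex (r := 1/2) (by norm_num)
  have hx0 : (x₀ : X) ≠ 0 := by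
    intro h
    apply hx₀
    show (x₀ : X) ∈ Z
    have : (x₀ : X) = 0 := h
    rw [this]; exact Z.zero_mem
  have hnx : ‖(x₀ : X)‖ ≠ 0 := norm_ne_zero_iff.2 hx0
  refine ⟨(‖(x₀ : X)‖ : ℂ)⁻¹ • (x₀ : X), Y.smul_mem _ x₀.2, ?_, ?_⟩
  · simp [norm_smul, inv_mul_cancel₀ hnx]
  · intro z hz
    set w : X := (‖(x₀ : X)‖ : ℂ) • z with hw
    have hwZ : w ∈ Z := Z.smul_mem _ hz
    have hwY : w ∈ Y := hZY.le hwZ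
    have hkey : (1:ℝ)/2 * ‖(x₀ : X)‖ ≤ ‖(x₀ : X) - w‖ := by
      have := hdist ⟨w, hwY⟩ (by exact hwZ)
      simpa using this
    have heq : (‖(x₀ : X)‖ : ℂ)⁻¹ • (x₀ : X) - z
        = (‖(x₀ : X)‖ : ℂ)⁻¹ • ((x₀ : X) - w) := by
      rw [smul_sub, hw, smul_smul, inv_mul_cancel₀ (by exact_mod_cast hnx), one_smul]
    rw [heq, norm_smul]
    have h1 : ‖((‖(x₀ : X)‖ : ℂ))⁻¹‖ = ‖(x₀ : X)‖⁻¹ := by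
      simp
    rw [h1]
    have hpos : 0 < ‖(x₀ : X)‖ := (norm_nonneg _).lt_of_ne (Ne.symm hnx)
    rw [le_inv_mul_iff₀ hpos]
    linarith

lemma fredholm_surj [CompleteSpace X] (C : X →L[ℂ] X) (hC : IsCompactOperator ⇑C)
    (hinj : Function.Injective ⇑(1 + C)) : Function.Surjective ⇑(1 + C) := by
  by_contra hsurj
  set F : X →L[ℂ] X := 1 + C with hF
  set L : X →ₗ[ℂ] X := F.toLinearMap with hL
  obtain ⟨c, hc, hbd⟩ := aux_bddBelow C hC hinj
  set Y : ℕ → Submodule ℂ X := fun n => Submodule.map (L ^ n) ⊤ with hY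
  have hYsucc : ∀ n, Y (n + 1) = (Y n).map L := by
    intro n
    rw [hY]
    simp only [pow_succ']
    rw [Module.End.mul_eq_comp, Submodule.map_comp]
  have h0top : Y 0 = ⊤ := by
    rw [hY]; simp only [pow_zero]
    ext x; simp [Module.End.one_eq_id]
  have hYclosed : ∀ n, IsClosed ((Y n) : Set X) := by
    intro n
    induction n with
    | zero => rw [h0top]; simp only [Submodule.top_coe]; exact isClosed_univ
    | succ n ih =>
      rw [hYsucc n]
      exact aux_closed_map F hc hbd (Y n) ih
  have hLinj : Function.Injective L := hinj
  have hstrict : ∀ n, Y (n + 1) < Y n := by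
    intro n
    induction n with
    | zero =>
      rw [hYsucc 0, h0top, ← LinearMap.range_eq_map, lt_top_iff_ne_top]
      intro h
      exact hsurj (LinearMap.range_eq_top.mp h)
    | succ n ih =>
      have h2 : Submodule.map L (Y (n+1)) < Submodule.map L (Y n) :=
        lt_of_le_of_ne (Submodule.map_mono ih.le)
          (fun heq => ih.ne (Submodule.map_injective_of_injective hLinj heq))
      rwa [← hYsucc (n+1), ← hYsucc n] at h2
  have hanti : StrictAnti Y := strictAnti_nat_of_succ_lt hstrict
  have hchoice : ∀ n, ∃ u : X, u ∈ Y n ∧ ‖u‖ = 1 ∧ ∀ z ∈ Y (n+1), (1:ℝ)/2 ≤ ‖u - z‖ :=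
    fun n => aux_riesz (Y n) (Y (n+1)) (hstrict n) (hYclosed (n+1))
  choose u hmem hnorm hdist using hchoice
  have key : ∀ m n, m < n → (1:ℝ)/2 ≤ ‖C (u m) - C (u n)‖ := by
    intro m n hmn
    have hw : F (u m) - F (u n) + u n ∈ Y (m + 1) := by
      refine Submodule.add_mem _ (Submodule.sub_mem _ ?_ ?_) ?_
      · rw [hYsucc m]; exact ⟨u m, hmem m, rfl⟩
      · have : F (u n) ∈ Y (n + 1) := by rw [hYsucc n]; exact ⟨u n, hmem n, rfl⟩
        exact hanti.antitone (by omega : m + 1 ≤ n + 1) this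
      · exact hanti.antitone (by omega : m + 1 ≤ n) (hmem n)
    have := hdist m _ hw
    have heq : C (u m) - C (u n) = -(u m - (F (u m) - F (u n) + u n)) := by
      simp only [hF]
      simp only [ContinuousLinearMap.add_apply, ContinuousLinearMap.one_apply]
      abel
    rw [heq, norm_neg]
    exact this
  have humem : ∀ n, C (u n) ∈ closure (⇑C '' Metric.closedBall 0 1) :=
    fun n => subset_closure ⟨u n, by simp [hnorm n], rfl⟩
  obtain ⟨y, -, φ, hφ, hconv⟩ := (aux_compact_ball C hC).tendsto_subseq humem
  have hcauchy : CauchySeq fun n => C (u (φ n)) := hconv.cauchySeq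
  obtain ⟨N, hN⟩ := Metric.cauchySeq_iff.mp hcauchy (1/2) (by norm_num)
  have h1 := hN (N+1) (by omega) N (by omega)
  have h2 := key (φ N) (φ (N+1)) (hφ (by omega))
  rw [dist_eq_norm] at h1
  rw [norm_sub_rev] at h1
  linarith

end Aux


/-- (Halperin) For an infinite-dimensional Banach space `X`, the unitization
`{λI + K : K compact}` of the compact operators is directly finite. -/
theorem compact_unitization_directlyFinite
    (X : Type*) [NormedAddCommGroup X] [NormedSpace ℂ X] [CompleteSpace X]
    (hinf : ¬ FiniteDimensional ℂ X)
    (S T : X →L[ℂ] X)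
    (hS : ∃ (μ : ℂ) (K : X →L[ℂ] X), IsCompactOperator ⇑K ∧ S = μ • (1 : X →L[ℂ] X) + K)
    (hT : ∃ (μ : ℂ) (K : X →L[ℂ] X), IsCompactOperator ⇑K ∧ T = μ • (1 : X →L[ℂ] X) + K)
    (hST : S * T = 1) : T * S = 1 := by
  obtain ⟨ν, A, hA, rfl⟩ := hS
  obtain ⟨μ, B, hB, rfl⟩ := hT
  have hprod : (ν • (1 : X →L[ℂ] X) + A) * (μ • 1 + B)
      = (ν * μ) • 1 + (ν • B + μ • A + A * B) := by
    simp only [add_mul, mul_add, smul_mul_assoc, mul_smul_comm, one_mul, mul_one, smul_smul,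
      smul_add, mul_comm μ ν]
    abel
  have hD : ((1 : ℂ) - ν * μ) • (1 : X →L[ℂ] X) = ν • B + μ • A + A * B := by
    have h1 := hST
    rw [hprod] at h1
    have h2 : ν • B + μ • A + A * B = 1 - (ν * μ) • (1 : X →L[ℂ] X) :=
      eq_sub_of_add_eq' h1
    rw [h2, sub_smul, one_smul]
  have hDc : IsCompactOperator ⇑(ν • B + μ • A + A * B) := by
    have h1 : IsCompactOperator ⇑(ν • B) := hB.smul ν
    have h2 : IsCompactOperator ⇑(μ • A) := hA.smul μ
    have h3 : IsCompactOperator ⇑(A * B) := hB.clm_comp A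
    exact (h1.add h2).add h3
  have hscal : ν * μ = 1 := by
    by_contra hne
    have hsub : (1 : ℂ) - ν * μ ≠ 0 := sub_ne_zero.mpr (Ne.symm hne)
    have hIdc : IsCompactOperator ⇑((1 : X →L[ℂ] X)) := by
      have heq : (1 : X →L[ℂ] X) = ((1 : ℂ) - ν * μ)⁻¹ • (ν • B + μ • A + A * B) := by
        rw [← hD, smul_smul, inv_mul_cancel₀ hsub, one_smul]
      rw [heq]
      exact hDc.smul _
    obtain ⟨K, hK, hKmem⟩ := hIdc
    have hid : ⇑((1 : X →L[ℂ] X)) ⁻¹' K = K := rfl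
    rw [hid] at hKmem
    obtain ⟨r, hr, hball⟩ := Metric.mem_nhds_iff.mp hKmem
    have hsubset : Metric.closedBall (0 : X) (r / 2) ⊆ K :=
      (Metric.closedBall_subset_ball (by linarith)).trans hball
    have hcb : IsCompact (Metric.closedBall (0 : X) (r / 2)) :=
      hK.of_isClosed_subset Metric.isClosed_closedBall hsubset
    exact hinf (FiniteDimensional.of_isCompact_closedBall₀ ℂ (by linarith) hcb)
  have hμ : μ ≠ 0 := by
    intro h
    rw [h, mul_zero] at hscal
    exact zero_ne_one hscal
  set Cop : X →L[ℂ] X := μ⁻¹ • B with hCop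
  have hCc : IsCompactOperator ⇑Cop := hB.smul μ⁻¹
  have hTC : μ • ((1 : X →L[ℂ] X) + Cop) = μ • (1 : X →L[ℂ] X) + B := by
    rw [smul_add, hCop, smul_smul, mul_inv_cancel₀ hμ, one_smul]
  have happ : ∀ x, (μ • (1 : X →L[ℂ] X) + B) x = μ • ((1 + Cop) x) := by
    intro x
    rw [← hTC]
    simp
  have hleftapp : ∀ x, (ν • (1 : X →L[ℂ] X) + A) ((μ • (1 : X →L[ℂ] X) + B) x) = x := by
    intro x
    rw [← ContinuousLinearMap.mul_apply, hST, ContinuousLinearMap.one_apply]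
  have hFinj : Function.Injective ⇑((1 : X →L[ℂ] X) + Cop) := by
    intro x y hxy
    have h1 : (μ • (1 : X →L[ℂ] X) + B) x = (μ • (1 : X →L[ℂ] X) + B) y := by
      rw [happ, happ, hxy]
    calc x = (ν • (1 : X →L[ℂ] X) + A) ((μ • (1 : X →L[ℂ] X) + B) x) := (hleftapp x).symm
    _ = (ν • (1 : X →L[ℂ] X) + A) ((μ • (1 : X →L[ℂ] X) + B) y) := by rw [h1]
    _ = y := hleftapp y
  have hFsurj := fredholm_surj Cop hCc hFinj
  have hTsurj : Function.Surjective ⇑(μ • (1 : X →L[ℂ] X) + B) := by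
    intro x
    obtain ⟨y, hy⟩ := hFsurj (μ⁻¹ • x)
    exact ⟨y, by rw [happ, hy, smul_smul, mul_inv_cancel₀ hμ, one_smul]⟩
  ext x
  rw [ContinuousLinearMap.mul_apply, ContinuousLinearMap.one_apply]
  obtain ⟨y, hy⟩ := hTsurj x
  rw [← hy, hleftapp y]
end

section
/- Let M be a von Neumann algebra with faithful normal finite tracial state τ, let a ∈ M with ‖a‖ = 1, and let 1 ≤ p < ∞. Then for every ε > 0 there exists x in the closed unital C*-subalgebra generated by a*a with ‖x‖_p = 1 and ‖a x‖_p ≥ 1 − ε, where ‖y‖_p = τ((y*y)^{p/2})^{1/p}. -/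
/-- Auxiliary: membership of real continuous functional calculus in the elemental algebra. -/
lemma cfc_real_mem_elemental {M : Type*} [CStarAlgebra M] (b : M) (hb : IsSelfAdjoint b)
    (h : ℝ → ℝ) (hh : Continuous h) : cfc h b ∈ StarAlgebra.elemental ℂ b := by
  haveI : IsStarNormal b := hb.isStarNormal
  rw [cfc_real_eq_complex h hb]
  have hcont : ContinuousOn (fun z : ℂ => (h z.re : ℂ)) (spectrum ℂ b) :=
    Continuous.continuousOn (by fun_prop)
  rw [cfc_apply _ b hb.isStarNormal hcont, cfcHom_eq_of_isStarNormal]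
  exact ((continuousFunctionalCalculus b) _).2

/-- Let `M` be a von Neumann algebra (here: a unital C*-algebra) with a faithful finite
tracial state `τ`, let `a ∈ M` have `‖a‖ = 1`, and let `1 ≤ p < ∞`. For every `ε > 0`
there is `x` in the closed unital C*-subalgebra generated by `a*a` such that
`‖x‖ₚ = 1` and `‖a x‖ₚ ≥ 1 - ε`, where `‖y‖ₚ = τ((y*y)^{p/2})^{1/p}`. -/
theorem trace_Lp_norm_almost_attained
    (M : Type*) [CStarAlgebra M]
    (τ : M →ₗ[ℂ] ℂ)
    (hτ1 : τ 1 = 1)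
    (hpos : ∀ x : M, 0 ≤ (τ (star x * x)).re ∧ (τ (star x * x)).im = 0)
    (hfaithful : ∀ x : M, τ (star x * x) = 0 → x = 0)
    (htracial : ∀ x y : M, τ (x * y) = τ (y * x))
    (a : M) (ha : ‖a‖ = 1) (p : ℝ) (hp1 : 1 ≤ p) :
    ∀ ε : ℝ, 0 < ε →
      ∃ x ∈ StarAlgebra.elemental ℂ (star a * a),
        (τ (cfc (fun t : ℝ => t ^ (p / 2)) (star x * x))).re ^ (1 / p) = 1 ∧
        1 - ε ≤ (τ (cfc (fun t : ℝ => t ^ (p / 2)) (star (a * x) * (a * x)))).re ^ (1 / p) := by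
  intro ε hε
  letI : PartialOrder M := CStarAlgebra.spectralOrder M
  letI : StarOrderedRing M := CStarAlgebra.spectralOrderedRing M
  have hp0 : (0 : ℝ) < p := lt_of_lt_of_le one_pos hp1
  set b : M := star a * a with hb_def
  have hb_nonneg : 0 ≤ b := star_mul_self_nonneg a
  have hb_sa : IsSelfAdjoint b := hb_nonneg.isSelfAdjoint
  have hap : a ≠ 0 := by intro h; rw [h, norm_zero] at ha; linarith
  have hnt : Nontrivial M := nontrivial_of_ne a 0 hap
  have hb_norm : ‖b‖ = 1 := by rw [hb_def, CStarRing.norm_star_mul_self, ha, one_mul]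
  have h1spec : (1 : ℝ) ∈ spectrum ℝ b := hb_norm ▸ CStarAlgebra.norm_mem_spectrum_of_nonneg hb_nonneg
  have hspec_nonneg : ∀ t ∈ spectrum ℝ b, 0 ≤ t := spectrum_nonneg_of_nonneg hb_nonneg
  -- τ is real and nonnegative on nonnegative elements
  have tau_nonneg : ∀ m : M, 0 ≤ m → τ m = ((τ m).re : ℂ) ∧ 0 ≤ (τ m).re := by
    intro m hm
    have hsq : star (CFC.sqrt m) * CFC.sqrt m = m := by
      rw [(CFC.sqrt_nonneg (a := m)).isSelfAdjoint.star_eq]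
      exact CFC.sqrt_mul_sqrt_self m hm
    obtain ⟨h1, h2⟩ := hpos (CFC.sqrt m)
    rw [hsq] at h1 h2
    exact ⟨by apply Complex.ext <;> simp [h2], h1⟩
  have tau_mono : ∀ m₁ m₂ : M, m₁ ≤ m₂ → (τ m₁).re ≤ (τ m₂).re := by
    intro m₁ m₂ h
    have h0 := (tau_nonneg (m₂ - m₁) (sub_nonneg.mpr h)).2
    rw [map_sub] at h0
    simp only [Complex.sub_re] at h0
    linarith
  -- the bump function near the top of the spectrum
  set δ : ℝ := min ε 1 with hδ_def
  have hδ_pos : 0 < δ := lt_min hε one_pos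
  have hδ_le1 : δ ≤ 1 := min_le_right _ _
  have hδ_leε : δ ≤ ε := min_le_left _ _
  have h1δ : (0 : ℝ) ≤ 1 - δ := by linarith
  set f : ℝ → ℝ := fun t => max (t - (1 - δ)) 0 with hf_def
  have hf_cont : Continuous f := (continuous_id.sub continuous_const).max continuous_const
  have hf_nonneg : ∀ t, 0 ≤ f t := fun t => le_max_right _ _
  have hcfb_nonneg : 0 ≤ cfc f b := cfc_nonneg (fun t _ => hf_nonneg t)
  set c : ℝ := (τ (cfc f b)).re with hc_def
  obtain ⟨hτfb_eq, hc_nonneg⟩ := tau_nonneg _ hcfb_nonneg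
  have hc_pos : 0 < c := by
    rcases lt_or_eq_of_le hc_nonneg with h | h
    · exact h
    · exfalso
      have h0 : τ (cfc f b) = 0 := by rw [hτfb_eq, ← h, Complex.ofReal_zero]
      have hsq : star (CFC.sqrt (cfc f b)) * CFC.sqrt (cfc f b) = cfc f b := by
        rw [(CFC.sqrt_nonneg (a := cfc f b)).isSelfAdjoint.star_eq]
        exact CFC.sqrt_mul_sqrt_self _ hcfb_nonneg
      have hy := hfaithful _ (by rw [hsq]; exact h0)
      have hzero : cfc f b = 0 := by rw [← hsq, hy, mul_zero]
      have heq : Set.EqOn f (fun _ => (0 : ℝ)) (spectrum ℝ b) :=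
        eqOn_of_cfc_eq_cfc (by rw [hzero, cfc_const_zero])
          hf_cont.continuousOn continuousOn_const hb_sa
      have hf1 : f 1 = 0 := heq h1spec
      have : f 1 = δ := by
        simp only [hf_def]
        rw [show (1 : ℝ) - (1 - δ) = δ by ring, max_eq_left hδ_pos.le]
      rw [this] at hf1
      exact hδ_pos.ne' hf1
  -- the element x
  set g : ℝ → ℝ := fun t => (f t / c) ^ (1 / p : ℝ) with hg_def
  have hg_cont : Continuous g :=
    (Real.continuous_rpow_const (by positivity)).comp (hf_cont.div_const c)
  have hg_nonneg : ∀ t, 0 ≤ g t := fun t => Real.rpow_nonneg (by positivity) _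
  set x : M := cfc g b with hx_def
  refine ⟨x, cfc_real_mem_elemental b hb_sa g hg_cont, ?_, ?_⟩
  -- key pointwise identity : (g t * g t) ^ (p/2) = f t / c
  all_goals
    have key : ∀ t : ℝ, (g t * g t) ^ (p / 2 : ℝ) = f t / c := by
      intro t
      have hy : (0 : ℝ) ≤ f t / c := by positivity
      have h1 : g t * g t = (f t / c) ^ (2 / p : ℝ) := by
        rw [hg_def]
        rw [← Real.rpow_add' hy (by positivity)]
        norm_num
        ring_nf
      rw [h1, ← Real.rpow_mul hy]
      rw [show (2 / p) * (p / 2) = 1 by field_simp]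
      exact Real.rpow_one _
  -- first goal : the p-norm of x is 1
  · have hx_sa : IsSelfAdjoint x := cfc_predicate g b
    have hsxx : star x * x = cfc (fun t => g t * g t) b := by
      rw [hx_sa.star_eq, hx_def, ← cfc_mul g g b hg_cont.continuousOn hg_cont.continuousOn]
    have hcomp : cfc (fun t : ℝ => t ^ (p / 2)) (star x * x) = cfc (fun t => c⁻¹ * f t) b := by
      rw [hsxx, ← cfc_comp' (fun t : ℝ => t ^ (p / 2)) (fun t => g t * g t) b
        (Real.continuous_rpow_const (by positivity)).continuousOn
        ((hg_cont.mul hg_cont).continuousOn) hb_sa]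
      exact cfc_congr fun t _ => by rw [key t, div_eq_inv_mul]
    rw [hcomp, cfc_const_mul c⁻¹ f b hf_cont.continuousOn, LinearMap.map_smul_of_tower τ,
      Complex.smul_re, ← hc_def, smul_eq_mul, inv_mul_cancel₀ hc_pos.ne', Real.one_rpow]
  -- second goal : the p-norm of a * x is at least 1 - ε
  · have hx_sa : IsSelfAdjoint x := cfc_predicate g b
    have hsax : star (a * x) * (a * x) = cfc (fun t => g t * t * g t) b := by
      have h1 : star (a * x) * (a * x) = x * b * x := by
        rw [star_mul, hx_sa.star_eq, hb_def]
        noncomm_ring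
      rw [h1, hx_def]
      nth_rewrite 2 [← cfc_id ℝ b hb_sa]
      rw [← cfc_mul g id b hg_cont.continuousOn continuousOn_id,
        ← cfc_mul (fun x => g x * id x) g b ((hg_cont.mul continuous_id).continuousOn) hg_cont.continuousOn]
      rfl
    have hcomp : cfc (fun t : ℝ => t ^ (p / 2)) (star (a * x) * (a * x)) =
        cfc (fun t => (g t * t * g t) ^ (p / 2 : ℝ)) b := by
      rw [hsax, ← cfc_comp' (fun t : ℝ => t ^ (p / 2)) (fun t => g t * t * g t) b
        (Real.continuous_rpow_const (by positivity)).continuousOn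
        ((hg_cont.mul continuous_id).mul hg_cont).continuousOn hb_sa]
    -- pointwise lower bound on the spectrum
    have hlow : ∀ t ∈ spectrum ℝ b,
        ((1 - δ) ^ (p / 2 : ℝ) / c) * f t ≤ (g t * t * g t) ^ (p / 2 : ℝ) := by
      intro t ht
      have ht0 : 0 ≤ t := hspec_nonneg t ht
      rcases eq_or_lt_of_le (hf_nonneg t) with h0 | h0
      · rw [← h0, mul_zero]
        positivity
      · have htδ : 1 - δ ≤ t := by
          by_contra hcon
          push_neg at hcon
          have : f t = 0 := max_eq_right (by linarith)
          rw [this] at h0; exact lt_irrefl 0 h0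
        have hgg : g t * t * g t = t * (g t * g t) := by ring
        have hy : (0 : ℝ) ≤ f t / c := by positivity
        have hgg_nonneg : 0 ≤ g t * g t := mul_nonneg (hg_nonneg t) (hg_nonneg t)
        rw [hgg, Real.mul_rpow ht0 hgg_nonneg, key t]
        have h2 : (1 - δ) ^ (p / 2 : ℝ) ≤ t ^ (p / 2 : ℝ) :=
          Real.rpow_le_rpow h1δ htδ (by positivity)
        rw [div_mul_eq_mul_div, div_eq_mul_inv, div_eq_mul_inv]
        have : 0 ≤ f t * c⁻¹ := by positivity
        calc (1 - δ) ^ (p / 2 : ℝ) * f t * c⁻¹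
            = (1 - δ) ^ (p / 2 : ℝ) * (f t * c⁻¹) := by ring
          _ ≤ t ^ (p / 2 : ℝ) * (f t * c⁻¹) := by
              exact mul_le_mul_of_nonneg_right h2 this
    have hmono : cfc (fun t => ((1 - δ) ^ (p / 2 : ℝ) / c) * f t) b ≤
        cfc (fun t => (g t * t * g t) ^ (p / 2 : ℝ)) b := by
      refine cfc_mono hlow ?_ ?_
      · exact (continuous_const.mul hf_cont).continuousOn
      · exact ((Real.continuous_rpow_const (by positivity)).comp
          ((hg_cont.mul continuous_id).mul hg_cont)).continuousOn
    have hτlow : (τ (cfc (fun t => ((1 - δ) ^ (p / 2 : ℝ) / c) * f t) b)).re =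
        (1 - δ) ^ (p / 2 : ℝ) := by
      rw [cfc_const_mul _ f b hf_cont.continuousOn, LinearMap.map_smul_of_tower τ, Complex.smul_re,
        ← hc_def, smul_eq_mul, div_mul_cancel₀ _ hc_pos.ne']
    have hge : (1 - δ) ^ (p / 2 : ℝ) ≤
        (τ (cfc (fun t : ℝ => t ^ (p / 2)) (star (a * x) * (a * x)))).re := by
      rw [hcomp, ← hτlow]
      exact tau_mono _ _ hmono
    -- conclude
    have hstep1 : ((1 - δ) ^ (p / 2 : ℝ)) ^ (1 / p : ℝ) ≤
        (τ (cfc (fun t : ℝ => t ^ (p / 2)) (star (a * x) * (a * x)))).re ^ (1 / p : ℝ) :=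
      Real.rpow_le_rpow (by positivity) hge (by positivity)
    have hstep2 : ((1 - δ) ^ (p / 2 : ℝ)) ^ (1 / p : ℝ) = (1 - δ) ^ (1 / 2 : ℝ) := by
      rw [← Real.rpow_mul h1δ]
      congr 1
      field_simp
    have hstep3 : 1 - δ ≤ (1 - δ) ^ (1 / 2 : ℝ) := by
      rcases eq_or_lt_of_le h1δ with h0 | h0
      · rw [← h0]
        rw [Real.zero_rpow (by norm_num)]
      · calc 1 - δ = (1 - δ) ^ (1 : ℝ) := (Real.rpow_one _).symm
          _ ≤ (1 - δ) ^ (1 / 2 : ℝ) :=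
            Real.rpow_le_rpow_of_exponent_ge h0 (by linarith) (by norm_num)
    calc 1 - ε ≤ 1 - δ := by linarith
      _ ≤ (1 - δ) ^ (1 / 2 : ℝ) := hstep3
      _ = ((1 - δ) ^ (p / 2 : ℝ)) ^ (1 / p : ℝ) := hstep2.symm
      _ ≤ _ := hstep1
end
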